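/- Refined 5-lemma (filtration form): in an abelian category, suppose given morphisms α : a → b, β : b → c, γ : c → d, θ : e → f, ι : f → g, κ : g → h, and vertical morphisms δ : a → e, ε : b → f, ζ : c → g, η : d → h, such that α·β = 0, β·γ = 0, θ·ι = 0, ι·κ = 0, the squares commute (α·ε = δ·θ, β·ζ = ε·ι, γ·η = ζ·κ), δ is an epimorphism, and η is a monomorphism. Then ker(ζ) admits a finite filtration of subobjects whose successive subquotients are isomorphic to subquotients of the three objects ker(ε), H(β,γ), and H(θ,ι). In particular, if ker(ε) = 0, H(β,γ) = 0, and H(θ,ι) = 0, then ζ is a monomorphism. -/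

import Mathlib

/-
Elementwise: `s₂ = ker ζ ∩ im β` and `s₁ = β(ker ε) ⊆ s₂`. Since `η` is mono, `ker ζ ⊆ ker γ`, so
`ker ζ / s₂` embeds into `H(β,γ)`. An element `x = β y` of `s₂` has `ε y ∈ ker ι` by the middle
square; if its class in `H(θ,ι)` vanishes then `ε y = θ δ a'` (`δ` epi), so `y - α a' ∈ ker ε` and
`x = β (y - α a') ∈ s₁`. Hence `s₂ / s₁` is a quotient of a subobject of `H(θ,ι)`. Elements are
replaced by morphisms up to refinement, i.e. after precomposing with epimorphisms.
-/

open CategoryTheory Limits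

namespace AdelmanPaper

universe v u

variable {B : Type u} [Category.{v} B] [Abelian B]

/-- The homology `H(φ, χ) = ker(χ)/(im(φ) ∩ ker(χ))` of a (not necessarily zero-composable)
composable pair in an abelian category, realized as the image of the canonical morphism
`ker(χ) ⟶ coker(φ)`. -/
noncomputable def pairHomology {x y z : B} (φ : x ⟶ y) (χ : y ⟶ z) : B :=
  image (kernel.ι χ ≫ cokernel.π φ)

/-- `X` is a subquotient of `Y` if `X` is a quotient of a subobject of `Y`. -/
def IsSubquotient (X Y : B) : Prop :=
  ∃ (Z : B) (i : Z ⟶ Y) (p : Z ⟶ X), Mono i ∧ Epi p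

lemma IsSubquotient.isZero {X Y : B} (h : IsSubquotient X Y) (hY : IsZero Y) : IsZero X := by
  obtain ⟨Z, i, p, _, _⟩ := h
  exact IsZero.of_epi p (IsZero.of_mono i hY)

/-- `X` is a quotient of `coimage ρ ≅ image ρ ⊆ Y`. -/
lemma IsSubquotient.of_kernel_ι_comp_eq_zero {P X Y : B} (p : P ⟶ X) [Epi p] (ρ : P ⟶ Y)
    (h : kernel.ι ρ ≫ p = 0) : IsSubquotient X Y := by
  refine ⟨Abelian.coimage ρ, (Abelian.coimageIsoImage ρ).hom ≫ Abelian.image.ι ρ,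
    cokernel.desc _ p h, inferInstance, ?_⟩
  exact epi_of_epi_fac (cokernel.π_desc _ p h)

lemma _root_.CategoryTheory.Limits.IsZero.of_isZero_cokernel {X Y : B} (f : X ⟶ Y) (hX : IsZero X)
    (hf : IsZero (cokernel f)) : IsZero Y :=
  have := Preadditive.epi_of_isZero_cokernel f hf
  hX.of_epi f

namespace pairHomology

variable {x y z : B} (φ : x ⟶ y) (χ : y ⟶ z)

noncomputable def ι : pairHomology φ χ ⟶ cokernel φ :=
  image.ι _

instance : Mono (ι φ χ) :=
  inferInstanceAs (Mono (image.ι _))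

noncomputable def lift {T : B} (t : T ⟶ y) (ht : t ≫ χ = 0) : T ⟶ pairHomology φ χ :=
  kernel.lift χ t ht ≫ factorThruImage _

@[simp]
lemma lift_ι {T : B} (t : T ⟶ y) (ht : t ≫ χ = 0) : lift φ χ t ht ≫ ι φ χ = t ≫ cokernel.π φ := by
  dsimp only [lift, ι, pairHomology]
  rw [Category.assoc, image.fac, kernel.lift_ι_assoc]

lemma kernel_ι_lift_comp_cokernel_π {T : B} (t : T ⟶ y) (ht : t ≫ χ = 0) :
    kernel.ι (lift φ χ t ht) ≫ t ≫ cokernel.π φ = 0 := by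
  rw [← lift_ι φ χ t ht, kernel.condition_assoc, Limits.zero_comp]

end pairHomology

lemma epi_pullback_snd_of_comp_cokernel_π_eq_zero {X Y Z : B} (β : X ⟶ Y) (t : Z ⟶ Y)
    (ht : t ≫ cokernel.π β = 0) : Epi (pullback.snd β t) := by
  rw [epi_iff_surjective_up_to_refinements]
  intro A z
  obtain ⟨A', π, _, y, hy⟩ := (CokernelCofork.IsColimit.comp_π_eq_zero_iff_up_to_refinements
    (cokernelIsCokernel β) (z ≫ t)).1 (by simp [ht])
  exact ⟨A', π, inferInstance, pullback.lift y (π ≫ z) (by simpa using hy.symm),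
    (pullback.lift_snd _ _ _).symm⟩

lemma isSubquotient_cokernel_kernelSubobject_pairHomology {b c d K : B} (β : b ⟶ c) (γ : c ⟶ d)
    (j : K ⟶ c) (hj : j ≫ γ = 0) :
    IsSubquotient (cokernel (kernelSubobject (j ≫ cokernel.π β)).arrow) (pairHomology β γ) := by
  refine .of_kernel_ι_comp_eq_zero (cokernel.π _) (pairHomology.lift β γ j hj) ?_
  have hk := pairHomology.kernel_ι_lift_comp_cokernel_π β γ j hj
  rw [← Subobject.factorThru_arrow _ _ (kernelSubobject_factors _ _ hk), Category.assoc,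
    cokernel.condition, Limits.comp_zero]

section MiddleSquares

variable {a b c e f g : B} (α : a ⟶ b) (β : b ⟶ c) (θ : e ⟶ f) (ι : f ⟶ g) (δ : a ⟶ e)
  (ε : b ⟶ f) (ζ : c ⟶ g)

lemma comp_eq_kernel_ι_comp_up_to_refinements (hαβ : α ≫ β = 0) (sq1 : α ≫ ε = δ ≫ θ) [Epi δ]
    {T : B} (t : T ⟶ b) (ht : t ≫ ε ≫ cokernel.π θ = 0) :
    ∃ (Q : B) (π : Q ⟶ T) (_ : Epi π) (k : Q ⟶ kernel ε), π ≫ t ≫ β = k ≫ kernel.ι ε ≫ β := by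
  obtain ⟨Q₁, π₁, _, x, hx⟩ := (CokernelCofork.IsColimit.comp_π_eq_zero_iff_up_to_refinements
    (cokernelIsCokernel θ) (t ≫ ε)).1 (by simpa using ht)
  obtain ⟨Q, π, _, a', ha'⟩ := surjective_up_to_refinements_of_epi δ x
  have hk : (π ≫ π₁ ≫ t - a' ≫ α) ≫ ε = 0 := by
    simp only [Preadditive.sub_comp, Category.assoc, sq1, ← reassoc_of% ha', hx, sub_self]
  refine ⟨Q, π ≫ π₁, epi_comp _ _, kernel.lift ε _ hk, ?_⟩
  simp [Preadditive.sub_comp, hαβ]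

lemma isSubquotient_cokernel_imageToKernel_pairHomology (hαβ : α ≫ β = 0)
    (sq1 : α ≫ ε = δ ≫ θ) (w : ε ≫ ι = β ≫ ζ) [Epi δ] :
    IsSubquotient (cokernel (imageToKernel (kernel.map ε ζ β ι w) (kernel.ι ζ ≫ cokernel.π β)
      (by simp))) (pairHomology θ ι) := by
  have hu : kernel.map ε ζ β ι w ≫ kernel.ι ζ ≫ cokernel.π β = 0 := by simp
  let x := (kernelSubobject (kernel.ι ζ ≫ cokernel.π β)).arrow ≫ kernel.ι ζ
  have := epi_pullback_snd_of_comp_cokernel_π_eq_zero β x (by simp [x])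
  have hρ : (pullback.fst β x ≫ ε) ≫ ι = 0 := by
    rw [Category.assoc, w, pullback.condition_assoc]
    simp [x]
  let ρ := pairHomology.lift θ ι _ hρ
  refine .of_kernel_ι_comp_eq_zero (pullback.snd β x ≫ cokernel.π _) ρ ?_
  have hkρ : (kernel.ι ρ ≫ pullback.fst β x) ≫ ε ≫ cokernel.π θ = 0 := by
    simpa only [Category.assoc] using pairHomology.kernel_ι_lift_comp_cokernel_π θ ι _ hρ
  obtain ⟨Q, π, _, k, hk⟩ := comp_eq_kernel_ι_comp_up_to_refinements α β θ δ ε hαβ sq1 _ hkρ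
  have hsnd : π ≫ kernel.ι ρ ≫ pullback.snd β x =
      k ≫ factorThruImageSubobject _ ≫ imageToKernel _ _ hu := by
    rw [← cancel_mono x]
    calc (π ≫ kernel.ι ρ ≫ pullback.snd β x) ≫ x = π ≫ (kernel.ι ρ ≫ pullback.fst β x) ≫ β := by
          simp only [Category.assoc, pullback.condition]
      _ = k ≫ kernel.ι ε ≫ β := hk
      _ = _ := by simp [x]
  rw [← cancel_epi π]
  simpa using hsnd =≫ cokernel.π (imageToKernel _ _ hu)

end MiddleSquares

theorem refined_five_lemma_filtration_general
    {a b c d e f g h : B}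
    (α : a ⟶ b) (β : b ⟶ c) (γ : c ⟶ d) (θ : e ⟶ f) (ι : f ⟶ g) (κ : g ⟶ h)
    (δ : a ⟶ e) (ε : b ⟶ f) (ζ : c ⟶ g) (η : d ⟶ h)
    (hαβ : α ≫ β = 0)
    (sq1 : α ≫ ε = δ ≫ θ) (sq2 : β ≫ ζ = ε ≫ ι) (sq3 : γ ≫ η = ζ ≫ κ)
    [Epi δ] [Mono η] :
    (∃ (s₁ s₂ : Subobject (kernel ζ)) (hle : s₁ ≤ s₂),
      IsSubquotient ((s₁ : B)) (kernel ε) ∧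
      IsSubquotient (cokernel (Subobject.ofLE s₁ s₂ hle)) (pairHomology θ ι) ∧
      IsSubquotient (cokernel s₂.arrow) (pairHomology β γ)) ∧
    (IsZero (kernel ε) → IsZero (pairHomology β γ) → IsZero (pairHomology θ ι) → Mono ζ) := by
  have hζγ : kernel.ι ζ ≫ γ = 0 := by simp [← cancel_mono η, sq3]
  have hu : kernel.map ε ζ β ι sq2.symm ≫ kernel.ι ζ ≫ cokernel.π β = 0 := by simp
  have h₁ : IsSubquotient (imageSubobject (kernel.map ε ζ β ι sq2.symm) : B) (kernel ε) :=
    ⟨_, 𝟙 _, factorThruImageSubobject _, inferInstance, inferInstance⟩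
  have h₂ := isSubquotient_cokernel_imageToKernel_pairHomology α β θ ι δ ε ζ hαβ sq1 sq2.symm
  have h₃ := isSubquotient_cokernel_kernelSubobject_pairHomology β γ _ hζγ
  refine ⟨⟨_, _, image_le_kernel _ _ hu, h₁, h₂, h₃⟩, fun hε hβγ hθι => ?_⟩
  have hK : IsZero (kernel ζ) :=
    ((h₁.isZero hε).of_isZero_cokernel _ (h₂.isZero hθι)).of_isZero_cokernel _ (h₃.isZero hβγ)
  exact Preadditive.mono_of_isZero_kernel ζ hK

/-- STATEMENT 17 (refined 5-lemma, filtration form): given the commutative diagram with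
`α·β = β·γ = θ·ι = ι·κ = 0`, `δ` epi and `η` mono, the kernel of `ζ` admits a finite
filtration whose successive subquotients are (isomorphic to) subquotients of the three objects
`ker(ε)`, `H(θ,ι)` and `H(β,γ)`; in particular, if these three objects are zero then `ζ` is a
monomorphism. -/
theorem refined_five_lemma_filtration
    {a b c d e f g h : B}
    (α : a ⟶ b) (β : b ⟶ c) (γ : c ⟶ d) (θ : e ⟶ f) (ι : f ⟶ g) (κ : g ⟶ h)
    (δ : a ⟶ e) (ε : b ⟶ f) (ζ : c ⟶ g) (η : d ⟶ h)
    (hαβ : α ≫ β = 0) (hβγ : β ≫ γ = 0) (hθι : θ ≫ ι = 0) (hικ : ι ≫ κ = 0)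
    (sq1 : α ≫ ε = δ ≫ θ) (sq2 : β ≫ ζ = ε ≫ ι) (sq3 : γ ≫ η = ζ ≫ κ)
    [Epi δ] [Mono η] :
    (∃ (s₁ s₂ : Subobject (kernel ζ)) (hle : s₁ ≤ s₂),
      IsSubquotient ((s₁ : B)) (kernel ε) ∧
      IsSubquotient (cokernel (Subobject.ofLE s₁ s₂ hle)) (pairHomology θ ι) ∧
      IsSubquotient (cokernel s₂.arrow) (pairHomology β γ)) ∧
    (IsZero (kernel ε) → IsZero (pairHomology β γ) → IsZero (pairHomology θ ι) → Mono ζ) :=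
  refined_five_lemma_filtration_general α β γ θ ι κ δ ε ζ η hαβ sq1 sq2 sq3

end AdelmanPaper
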